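/- arXiv:2406.00344 — 4 statements merged into one kernel-verified Lean document; each statement's English description precedes it below -/
import Mathlib

section
/- Let $G=(U \cup L, E)$ be a bipartite graph and fix a strict total order $\prec$ (priority) on the vertices. Then every butterfly $\langle x,y,z,w \rangle$ (a $2\times 2$ biclique with $x,z$ on one side and $y,w$ on the other) is formed by exactly one unordered pair of wedges $\{\langle a \leadsto b \leadsto c\rangle, \langle a \leadsto d \leadsto c\rangle\}$ such that in each wedge the priority of the start vertex is minimal among the three vertices of the wedge, i.e., $a \prec b$ and $a \prec c$. -/
/-- Every butterfly `⟨x,y,z,w⟩` of a bipartite graph (with `x,z ∈ U` and `y,w ∈ L`)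
is formed by exactly one unordered pair of wedges `{⟨a⇝b⇝c⟩, ⟨a⇝d⇝c⟩}` whose start
vertex `a` has minimal priority within each wedge (`a ≺ b`, `a ≺ c`, `a ≺ d`).
The unordered pair of middle vertices `{b,d}` is represented by requiring `b ≺ d`,
and the pair of wedge endpoints by the ordered condition `a ≺ c`. -/
theorem stmt6 {V : Type*} (G : SimpleGraph V) (r : V → V → Prop)
    [IsStrictTotalOrder V r]
    (U L : Set V) (hUL : Disjoint U L)
    (x z y w : V) (hxU : x ∈ U) (hzU : z ∈ U) (hyL : y ∈ L) (hwL : w ∈ L)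
    (hxz : x ≠ z) (hyw : y ≠ w)
    (hxy : G.Adj x y) (hxw : G.Adj x w) (hzy : G.Adj z y) (hzw : G.Adj z w) :
    ∃! q : V × V × V × V,
      ((({q.1, q.2.1} : Set V) = {x, z} ∧ ({q.2.2.1, q.2.2.2} : Set V) = {y, w}) ∨
        (({q.1, q.2.1} : Set V) = {y, w} ∧ ({q.2.2.1, q.2.2.2} : Set V) = {x, z})) ∧
      G.Adj q.1 q.2.2.1 ∧ G.Adj q.2.2.1 q.2.1 ∧
      G.Adj q.1 q.2.2.2 ∧ G.Adj q.2.2.2 q.2.1 ∧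
      r q.1 q.2.2.1 ∧ r q.1 q.2.1 ∧ r q.1 q.2.2.2 ∧ r q.2.2.1 q.2.2.2 := by
  have asym : ∀ p q : V, r p q → r q p → False := fun p q h1 h2 =>
    (irrefl_of r p) (trans_of r h1 h2)
  have tri : ∀ p q : V, p ≠ q → r p q ∨ r q p := by
    intro p q h
    rcases trichotomous_of r p q with h1 | h1 | h1
    · exact Or.inl h1
    · exact absurd h1 h
    · exact Or.inr h1
  have hxy' : x ≠ y := fun h => (Set.disjoint_left.mp hUL hxU) (h ▸ hyL)
  have hxw' : x ≠ w := fun h => (Set.disjoint_left.mp hUL hxU) (h ▸ hwL)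
  have hzy' : z ≠ y := fun h => (Set.disjoint_left.mp hUL hzU) (h ▸ hyL)
  have hzw' : z ≠ w := fun h => (Set.disjoint_left.mp hUL hzU) (h ▸ hwL)
  have uniq : ∀ q q' : V × V × V × V,
      (((({q.1, q.2.1} : Set V) = {x, z} ∧ ({q.2.2.1, q.2.2.2} : Set V) = {y, w}) ∨
        (({q.1, q.2.1} : Set V) = {y, w} ∧ ({q.2.2.1, q.2.2.2} : Set V) = {x, z})) ∧
      G.Adj q.1 q.2.2.1 ∧ G.Adj q.2.2.1 q.2.1 ∧
      G.Adj q.1 q.2.2.2 ∧ G.Adj q.2.2.2 q.2.1 ∧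
      r q.1 q.2.2.1 ∧ r q.1 q.2.1 ∧ r q.1 q.2.2.2 ∧ r q.2.2.1 q.2.2.2) →
      (((({q'.1, q'.2.1} : Set V) = {x, z} ∧ ({q'.2.2.1, q'.2.2.2} : Set V) = {y, w}) ∨
        (({q'.1, q'.2.1} : Set V) = {y, w} ∧ ({q'.2.2.1, q'.2.2.2} : Set V) = {x, z})) ∧
      G.Adj q'.1 q'.2.2.1 ∧ G.Adj q'.2.2.1 q'.2.1 ∧
      G.Adj q'.1 q'.2.2.2 ∧ G.Adj q'.2.2.2 q'.2.1 ∧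
      r q'.1 q'.2.2.1 ∧ r q'.1 q'.2.1 ∧ r q'.1 q'.2.2.2 ∧ r q'.2.2.1 q'.2.2.2) →
      q = q' := by
    rintro ⟨a, c, b, d⟩ ⟨a', c', b', d'⟩
      ⟨hset, _, _, _, _, hab, hac, had, hbd⟩
      ⟨hset', _, _, _, _, hab', hac', had', hbd'⟩
    simp only [Set.pair_eq_pair_iff] at hset hset'
    rcases hset with ⟨hp1 | hp1, hp2 | hp2⟩ | ⟨hp1 | hp1, hp2 | hp2⟩ <;>
      rcases hset' with ⟨hq1 | hq1, hq2 | hq2⟩ | ⟨hq1 | hq1, hq2 | hq2⟩ <;>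
      obtain ⟨rfl, rfl⟩ := hp1 <;> obtain ⟨rfl, rfl⟩ := hp2 <;>
      obtain ⟨h1, h2⟩ := hq1 <;> obtain ⟨h3, h4⟩ := hq2 <;>
      subst h1 <;> subst h2 <;> subst h3 <;> subst h4 <;>
      first
        | rfl
        | (exact absurd rfl hxz)
        | (exact absurd rfl hyw)
        | (exact absurd rfl hxz.symm)
        | (exact absurd rfl hyw.symm)
        | (exact absurd hab' (fun h => asym _ _ h hab))
        | (exact absurd hac' (fun h => asym _ _ h hac))
        | (exact absurd had' (fun h => asym _ _ h had))
        | (exact absurd hbd' (fun h => asym _ _ h hbd))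
        | (exact absurd hbd' (fun h => asym _ _ h (trans_of r hab hbd)))
        | (exact absurd (trans_of r hab' hbd') (fun h => asym _ _ h hab))
        | (exact absurd (trans_of r hab hbd) (fun h => asym _ _ h hab'))
  rcases tri x z hxz with hU | hU <;> rcases tri y w hyw with hL | hL
  · rcases tri x y hxy' with hm | hm
    · exact ⟨(x, z, y, w), ⟨Or.inl ⟨rfl, rfl⟩, hxy, hzy.symm, hxw, hzw.symm,
        hm, hU, trans_of r hm hL, hL⟩,
        fun q hq => uniq q _ hq ⟨Or.inl ⟨rfl, rfl⟩, hxy, hzy.symm, hxw, hzw.symm,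
          hm, hU, trans_of r hm hL, hL⟩⟩
    · exact ⟨(y, w, x, z), ⟨Or.inr ⟨rfl, rfl⟩, hxy.symm, hxw, hzy.symm, hzw,
        hm, hL, trans_of r hm hU, hU⟩,
        fun q hq => uniq q _ hq ⟨Or.inr ⟨rfl, rfl⟩, hxy.symm, hxw, hzy.symm, hzw,
          hm, hL, trans_of r hm hU, hU⟩⟩
  · rcases tri x w hxw' with hm | hm
    · exact ⟨(x, z, w, y), ⟨Or.inl ⟨rfl, Set.pair_comm w y⟩, hxw, hzw.symm, hxy, hzy.symm,
        hm, hU, trans_of r hm hL, hL⟩,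
        fun q hq => uniq q _ hq ⟨Or.inl ⟨rfl, Set.pair_comm w y⟩, hxw, hzw.symm, hxy, hzy.symm,
          hm, hU, trans_of r hm hL, hL⟩⟩
    · exact ⟨(w, y, x, z), ⟨Or.inr ⟨Set.pair_comm w y, rfl⟩, hxw.symm, hxy, hzw.symm, hzy,
        hm, hL, trans_of r hm hU, hU⟩,
        fun q hq => uniq q _ hq ⟨Or.inr ⟨Set.pair_comm w y, rfl⟩, hxw.symm, hxy, hzw.symm, hzy,
          hm, hL, trans_of r hm hU, hU⟩⟩
  · rcases tri z y hzy' with hm | hm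
    · exact ⟨(z, x, y, w), ⟨Or.inl ⟨Set.pair_comm z x, rfl⟩, hzy, hxy.symm, hzw, hxw.symm,
        hm, hU, trans_of r hm hL, hL⟩,
        fun q hq => uniq q _ hq ⟨Or.inl ⟨Set.pair_comm z x, rfl⟩, hzy, hxy.symm, hzw, hxw.symm,
          hm, hU, trans_of r hm hL, hL⟩⟩
    · exact ⟨(y, w, z, x), ⟨Or.inr ⟨rfl, Set.pair_comm z x⟩, hzy.symm, hzw, hxy.symm, hxw,
        hm, hL, trans_of r hm hU, hU⟩,
        fun q hq => uniq q _ hq ⟨Or.inr ⟨rfl, Set.pair_comm z x⟩, hzy.symm, hzw, hxy.symm, hxw,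
          hm, hL, trans_of r hm hU, hU⟩⟩
  · rcases tri z w hzw' with hm | hm
    · exact ⟨(z, x, w, y), ⟨Or.inl ⟨Set.pair_comm z x, Set.pair_comm w y⟩, hzw, hxw.symm, hzy, hxy.symm,
        hm, hU, trans_of r hm hL, hL⟩,
        fun q hq => uniq q _ hq ⟨Or.inl ⟨Set.pair_comm z x, Set.pair_comm w y⟩, hzw, hxw.symm, hzy, hxy.symm,
          hm, hU, trans_of r hm hL, hL⟩⟩
    · exact ⟨(w, y, z, x), ⟨Or.inr ⟨Set.pair_comm w y, Set.pair_comm z x⟩, hzw.symm, hzy, hxw.symm, hxy,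
        hm, hL, trans_of r hm hU, hU⟩,
        fun q hq => uniq q _ hq ⟨Or.inr ⟨Set.pair_comm w y, Set.pair_comm z x⟩, hzw.symm, hzy, hxw.symm, hxy,
          hm, hL, trans_of r hm hU, hU⟩⟩
end

section
/- Let $L_1$ and $L_2$ be two finite nonempty sets of real numbers (timestamps on parallel edges of a wedge). For a window $[t_s,t_e]$, the wedge exists in the projected graph iff there exist $a \in L_1$ and $b \in L_2$ with $t_s \le \min(a,b)$ and $\max(a,b) \le t_e$. Define the set of pairs $M = \{(\min(a,b),\max(a,b)) : a \in L_1, b \in L_2\}$ and its subset $M^*$ of 'Pareto-minimal' pairs $(l,r)$ such that no other pair $(l',r') \in M$ satisfies $l' \ge l$ and $r' \le r$ with $(l',r') \ne (l,r)$. Then the wedge exists in $[t_s,t_e]$ iff there exists $(l,r) \in M^*$ with $t_s \le l$ and $r \le t_e$, and moreover $|M^*| \le 3\min(|L_1|,|L_2|)$. -/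
open Finset

/-- `L₁`, `L₂` are the timestamp sets of the two (duplicated) edges of a wedge.
`M` is the set of pairs `(min(a,b), max(a,b))` and `M*` its Pareto-minimal subset
(pairs not strictly dominated by another pair).  The wedge is active in window
`[ts,te]` iff some pair of `M*` fits in the window, and `|M*| ≤ 3·min(|L₁|,|L₂|)`. -/
theorem stmt10 (L₁ L₂ : Finset ℝ) (h₁ : L₁.Nonempty) (h₂ : L₂.Nonempty) :
    let M : Finset (ℝ × ℝ) := (L₁ ×ˢ L₂).image (fun p => (min p.1 p.2, max p.1 p.2))
    let Mstar : Finset (ℝ × ℝ) :=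
      M.filter (fun p => ∀ q ∈ M, p.1 ≤ q.1 → q.2 ≤ p.2 → q = p)
    (∀ ts te : ℝ,
      ((∃ a ∈ L₁, ∃ b ∈ L₂, ts ≤ min a b ∧ max a b ≤ te) ↔
        (∃ p ∈ Mstar, ts ≤ p.1 ∧ p.2 ≤ te))) ∧
    Mstar.card ≤ 3 * min L₁.card L₂.card := by
  intro M Mstar
  have key : ∀ p ∈ M, ∃ q ∈ Mstar, p.1 ≤ q.1 ∧ q.2 ≤ p.2 := by
    intro p hp
    set S := M.filter (fun q => p.1 ≤ q.1 ∧ q.2 ≤ p.2) with hS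
    have hSne : S.Nonempty := ⟨p, by simp [hS, hp]⟩
    obtain ⟨q, hqS, hqmax⟩ := S.exists_max_image (fun q => q.1 - q.2) hSne
    simp only [hS, mem_filter] at hqS
    refine ⟨q, ?_, hqS.2⟩
    simp only [Mstar, mem_filter]
    refine ⟨hqS.1, fun r hr hq1 hq2 => ?_⟩
    have hrS : r ∈ S := by
      simp only [hS, mem_filter]
      exact ⟨hr, le_trans hqS.2.1 hq1, le_trans hq2 hqS.2.2⟩
    have hle := hqmax r hrS
    have e1 : r.1 = q.1 := by linarith
    have e2 : r.2 = q.2 := by linarith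
    exact Prod.ext e1 e2
  have inj1 : ∀ p ∈ Mstar, ∀ q ∈ Mstar, p.1 = q.1 → p = q := by
    intro p hp q hq h
    rcases le_total p.2 q.2 with hle | hle
    · exact (mem_filter.1 hq).2 p (mem_filter.1 hp).1 h.ge hle
    · exact ((mem_filter.1 hp).2 q (mem_filter.1 hq).1 h.le hle).symm
  have inj2 : ∀ p ∈ Mstar, ∀ q ∈ Mstar, p.2 = q.2 → p = q := by
    intro p hp q hq h
    rcases le_total p.1 q.1 with hle | hle
    · exact ((mem_filter.1 hp).2 q (mem_filter.1 hq).1 hle h.ge).symm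
    · exact (mem_filter.1 hq).2 p (mem_filter.1 hp).1 hle h.le
  have bound : ∀ L : Finset ℝ, (∀ p ∈ Mstar, p.1 ∈ L ∨ p.2 ∈ L) →
      Mstar.card ≤ 2 * L.card := by
    intro L hL
    have hsub : Mstar ⊆ Mstar.filter (fun p => p.1 ∈ L) ∪ Mstar.filter (fun p => p.2 ∈ L) := by
      intro p hp
      rcases hL p hp with h | h
      · exact mem_union_left _ (mem_filter.2 ⟨hp, h⟩)
      · exact mem_union_right _ (mem_filter.2 ⟨hp, h⟩)
    have c1 : (Mstar.filter (fun p => p.1 ∈ L)).card ≤ L.card := by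
      apply card_le_card_of_injOn Prod.fst (fun p hp => (mem_filter.1 hp).2)
      intro p hp q hq h
      simp only [Finset.mem_coe, mem_filter] at hp hq
      exact inj1 p hp.1 q hq.1 h
    have c2 : (Mstar.filter (fun p => p.2 ∈ L)).card ≤ L.card := by
      apply card_le_card_of_injOn Prod.snd (fun p hp => (mem_filter.1 hp).2)
      intro p hp q hq h
      simp only [Finset.mem_coe, mem_filter] at hp hq
      exact inj2 p hp.1 q hq.1 h
    calc Mstar.card ≤ _ := card_le_card hsub
      _ ≤ (Mstar.filter (fun p => p.1 ∈ L)).card + (Mstar.filter (fun p => p.2 ∈ L)).card :=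
          card_union_le _ _
      _ ≤ L.card + L.card := Nat.add_le_add c1 c2
      _ = 2 * L.card := by ring
  constructor
  · intro ts te
    constructor
    · rintro ⟨a, ha, b, hb, hta, hbt⟩
      have hpM : (min a b, max a b) ∈ M :=
        mem_image.2 ⟨(a, b), mem_product.2 ⟨ha, hb⟩, rfl⟩
      obtain ⟨q, hq, hq1, hq2⟩ := key _ hpM
      exact ⟨q, hq, le_trans hta hq1, le_trans hq2 hbt⟩
    · rintro ⟨p, hp, hpl, hpr⟩
      have hpM : p ∈ M := (mem_filter.1 hp).1
      obtain ⟨⟨a, b⟩, hab, heq⟩ := mem_image.1 hpM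
      obtain ⟨ha, hb⟩ := mem_product.1 hab
      subst heq
      exact ⟨a, ha, b, hb, hpl, hpr⟩
  · have mem1 : ∀ p ∈ Mstar, p.1 ∈ L₁ ∨ p.2 ∈ L₁ := by
      intro p hp
      obtain ⟨⟨a, b⟩, hab, heq⟩ := mem_image.1 ((mem_filter.1 hp).1)
      obtain ⟨ha, hb⟩ := mem_product.1 hab
      subst heq
      rcases le_total a b with h | h
      · left; simpa [min_eq_left h] using ha
      · right; simpa [max_eq_left h] using ha
    have mem2 : ∀ p ∈ Mstar, p.1 ∈ L₂ ∨ p.2 ∈ L₂ := by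
      intro p hp
      obtain ⟨⟨a, b⟩, hab, heq⟩ := mem_image.1 ((mem_filter.1 hp).1)
      obtain ⟨ha, hb⟩ := mem_product.1 hab
      subst heq
      rcases le_total b a with h | h
      · left; simpa [min_eq_right h] using hb
      · right; simpa [max_eq_right h] using hb
    have b1 := bound L₁ mem1
    have b2 := bound L₂ mem2
    omega
end

section
/- In a graph (bipartite or not), the sum over all edges $(u,v)$ of $\min(\deg u, \deg v)$ is an upper bound on the total number of wedges counted by the vertex-priority scheme: the number of wedges $\langle x \leadsto y \leadsto z\rangle$ with $\mathrm{pr}(x) \prec \mathrm{pr}(y)$ and $\mathrm{pr}(x) \prec \mathrm{pr}(z)$ is at most $\sum_{(x,y) \in E} \min(\deg x, \deg y)$. -/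
/-! Charge each counted wedge `⟨x ⇝ y ⇝ z⟩` to its first edge `{x, y}`. Because `x` strictly
precedes `y` and precedence is asymmetric, an edge is charged only through one orientation, and
then by at most `deg y` wedges (one per neighbour `z` of `y`); as `x` precedes `y`, `deg y` is
`min (deg x) (deg y)`. -/

open Finset

namespace SimpleGraph

variable {V : Type*} [Fintype V] [DecidableEq V] (G : SimpleGraph V) [DecidableRel G.Adj]

def edgeMinDegree : Sym2 V → ℕ :=
  Sym2.lift ⟨fun x y => min (G.degree x) (G.degree y), fun _ _ => min_comm _ _⟩

theorem card_wedges_eq_sum_degree (D : Finset (V × V)) :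
    #{p : V × V × V | (p.1, p.2.1) ∈ D ∧ G.Adj p.2.1 p.2.2} = ∑ q ∈ D, G.degree q.2 := by
  rw [card_eq_sum_card_fiberwise (f := fun p => (p.1, p.2.1)) (t := D)
    (fun p hp => (mem_filter.1 hp).2.1)]
  refine sum_congr rfl fun ⟨a, b⟩ hab => ?_
  have hfiber : ({p : V × V × V | (p.1, p.2.1) ∈ D ∧ G.Adj p.2.1 p.2.2} : Finset _).filter
      (fun p => (p.1, p.2.1) = (a, b)) = (G.neighborFinset b).map
        ⟨fun z => (a, b, z), (Prod.mk_right_injective _).comp (Prod.mk_right_injective _)⟩ := by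
    ext ⟨x, y, z⟩
    simp only [mem_filter, mem_univ, true_and, mem_map, mem_neighborFinset,
      Function.Embedding.coeFn_mk, Prod.mk.injEq]
    constructor
    · rintro ⟨⟨-, hyz⟩, rfl, rfl⟩
      exact ⟨z, hyz, rfl, rfl, rfl⟩
    · rintro ⟨z, hz, rfl, rfl, rfl⟩
      exact ⟨⟨hab, hz⟩, rfl, rfl⟩
  rw [hfiber, card_map, card_neighborFinset_eq_degree]

theorem sum_degree_le_sum_edgeMinDegree (r : V → V → Prop) [DecidableRel r]
    (hr : ∀ x y, r x y → ¬ r y x) (hdeg : ∀ x y, r x y → G.degree y ≤ G.degree x) :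
    ∑ q ∈ ({q : V × V | G.Adj q.1 q.2 ∧ r q.1 q.2} : Finset _), G.degree q.2 ≤
      ∑ e ∈ G.edgeFinset, G.edgeMinDegree e := by
  set D : Finset (V × V) := {q | G.Adj q.1 q.2 ∧ r q.1 q.2}
  have hinj : Set.InjOn (fun q : V × V => s(q.1, q.2)) D := by
    rintro ⟨x, y⟩ hxy ⟨x', y'⟩ hxy' h
    simp only [coe_filter, mem_univ, true_and, Set.mem_ofPred_eq, D] at hxy hxy'
    rcases Sym2.eq_iff.1 h with ⟨rfl, rfl⟩ | ⟨rfl, rfl⟩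
    · rfl
    · exact absurd hxy'.2 (hr _ _ hxy.2)
  calc ∑ q ∈ D, G.degree q.2
      = ∑ q ∈ D, G.edgeMinDegree s(q.1, q.2) :=
        sum_congr rfl fun q hq => (min_eq_right (hdeg _ _ (mem_filter.1 hq).2.2)).symm
    _ = ∑ e ∈ D.image fun q => s(q.1, q.2), G.edgeMinDegree e := (sum_image hinj).symm
    _ ≤ ∑ e ∈ G.edgeFinset, G.edgeMinDegree e := by
        refine sum_le_sum_of_subset fun e he => ?_
        obtain ⟨q, hq, rfl⟩ := mem_image.1 he
        exact G.mem_edgeFinset.2 (mem_filter.1 hq).2.1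

end SimpleGraph

theorem stmt11_general {V : Type*} [Fintype V] [DecidableEq V]
    (G : SimpleGraph V) [DecidableRel G.Adj]
    (id : V → ℕ) :
    (Finset.univ.filter fun p : V × V × V =>
        G.Adj p.1 p.2.1 ∧ G.Adj p.2.1 p.2.2 ∧ p.1 ≠ p.2.2 ∧
        (G.degree p.2.1 < G.degree p.1 ∨
          (G.degree p.1 = G.degree p.2.1 ∧ id p.1 < id p.2.1)) ∧
        (G.degree p.2.2 < G.degree p.1 ∨
          (G.degree p.1 = G.degree p.2.2 ∧ id p.1 < id p.2.2))).card ≤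
      ∑ e ∈ G.edgeFinset,
        Sym2.lift ⟨fun x y => min (G.degree x) (G.degree y),
          fun x y => min_comm _ _⟩ e := by
  let precedes (x y : V) : Prop :=
    G.degree y < G.degree x ∨ (G.degree x = G.degree y ∧ id x < id y)
  let D : Finset (V × V) := {q | G.Adj q.1 q.2 ∧ precedes q.1 q.2}
  calc _ ≤ #{p : V × V × V | (p.1, p.2.1) ∈ D ∧ G.Adj p.2.1 p.2.2} := by
        refine card_le_card fun p hp => ?_
        simp only [mem_filter, mem_univ, true_and, D] at hp ⊢
        exact ⟨⟨hp.1, hp.2.2.2.1⟩, hp.2.1⟩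
    _ = ∑ q ∈ D, G.degree q.2 := G.card_wedges_eq_sum_degree D
    _ ≤ ∑ e ∈ G.edgeFinset, G.edgeMinDegree e :=
        G.sum_degree_le_sum_edgeMinDegree precedes (by omega) (by omega)

/-- The number of wedges `⟨x⇝y⇝z⟩` whose start vertex has strictly higher priority
than both other vertices (priority: larger degree first, ties broken by a fixed
injective identifier) is at most `∑_{(x,y)∈E} min(deg x, deg y)`, the sum ranging
over the undirected edges. -/
theorem stmt11 {V : Type*} [Fintype V] [DecidableEq V]
    (G : SimpleGraph V) [DecidableRel G.Adj]
    (id : V → ℕ) (hid : Function.Injective id) :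
    (Finset.univ.filter fun p : V × V × V =>
        G.Adj p.1 p.2.1 ∧ G.Adj p.2.1 p.2.2 ∧ p.1 ≠ p.2.2 ∧
        (G.degree p.2.1 < G.degree p.1 ∨
          (G.degree p.1 = G.degree p.2.1 ∧ id p.1 < id p.2.1)) ∧
        (G.degree p.2.2 < G.degree p.1 ∨
          (G.degree p.1 = G.degree p.2.2 ∧ id p.1 < id p.2.2))).card ≤
      ∑ e ∈ G.edgeFinset,
        Sym2.lift ⟨fun x y => min (G.degree x) (G.degree y),
          fun x y => min_comm _ _⟩ e :=
  stmt11_general G id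
end

section
/- Let $[l_1,r_1], [l_2,r_2], \dots, [l_k,r_k]$ be intervals with $l_1 < l_2 < \dots < l_k$ and $r_1 \le r_2 \le \dots \le r_k$. For a query window $[t_s,t_e]$, define the window to 'cover' interval $i$ if $t_s \le l_i$ and $r_i \le t_e$. Construct triples $[l_i, r_i, r_{i+1}]$ for $1 \le i < k$ and $[l_k, r_k, \infty]$. Then: (a) if $[t_s,t_e]$ covers at least one interval, exactly one triple $[l,r_1',r_2']$ satisfies $t_s \le l$ and $r_1' \le t_e < r_2'$; (b) if $[t_s,t_e]$ covers no interval, no triple satisfies this condition. -/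
/-!
The last covered interval is active: its successor starts after `ts` because `l` increases,
so it can fail to be covered only by ending after `te`. Conversely, an active triple `i` gives
`te < r (i + 1) ≤ r j` for every `j > i` because `r` is monotone, so no later triple is active.
-/

namespace IntervalChain

variable {α : Type*} [LinearOrder α] {k : ℕ} {l r : Fin k → α} {ts te : α}

def Covers (l r : Fin k → α) (ts te : α) (i : Fin k) : Prop :=
  ts ≤ l i ∧ r i ≤ te

/-- The triple `[l i, r i, r (i + 1)]` is active for the window `[ts, te]`; the last triple
has `∞` as its third entry, so the upper condition is vacuous there. -/
def TripleActive (l r : Fin k → α) (ts te : α) (i : Fin k) : Prop :=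
  ts ≤ l i ∧ r i ≤ te ∧ ∀ h : (i : ℕ) + 1 < k, te < r ⟨(i : ℕ) + 1, h⟩

theorem TripleActive.covers {i : Fin k} (h : TripleActive l r ts te i) : Covers l r ts te i :=
  ⟨h.1, h.2.1⟩

theorem tripleActive_of_maximal (hl : Monotone l) {i : Fin k}
    (hi : Maximal (Covers l r ts te) i) : TripleActive l r ts te i := by
  refine ⟨hi.1.1, hi.1.2, fun h => lt_of_not_ge fun hle => ?_⟩
  have hsucc : i < ⟨(i : ℕ) + 1, h⟩ := Fin.lt_def.mpr (Nat.lt_succ_self _)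
  have hcov : Covers l r ts te ⟨(i : ℕ) + 1, h⟩ := ⟨hi.1.1.trans (hl hsucc.le), hle⟩
  exact (hi.2 hcov hsucc.le).not_gt hsucc

theorem exists_tripleActive (hl : Monotone l) (h : ∃ i, Covers l r ts te i) :
    ∃ i, TripleActive l r ts te i := by
  obtain ⟨i, hi⟩ := (Set.toFinite {j | Covers l r ts te j}).exists_maximal h
  exact ⟨i, tripleActive_of_maximal hl hi⟩

theorem tripleActive_unique (hr : Monotone r) {i j : Fin k} (hi : TripleActive l r ts te i)
    (hj : TripleActive l r ts te j) : i = j := by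
  wlog hij : i < j generalizing i j
  · rcases (not_lt.mp hij).lt_or_eq with hji | hji
    · exact (this hj hi hji).symm
    · exact hji.symm
  have hk : (i : ℕ) + 1 < k := lt_of_le_of_lt (Fin.lt_def.mp hij) j.isLt
  have hle : r ⟨(i : ℕ) + 1, hk⟩ ≤ r j := hr (Fin.le_def.mpr (Fin.lt_def.mp hij))
  exact absurd (hi.2.2 hk) (not_lt.mpr (hle.trans hj.2.1))

end IntervalChain

theorem stmt16_general (k : ℕ) (l r : Fin k → ℝ)
    (hl : StrictMono l) (hr : Monotone r)
    (ts te : ℝ) :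
    ((∃ i, ts ≤ l i ∧ r i ≤ te) →
      ∃! i : Fin k, ts ≤ l i ∧ r i ≤ te ∧
        ∀ h : (i : ℕ) + 1 < k, te < r ⟨(i : ℕ) + 1, h⟩) ∧
    ((∀ i, ¬(ts ≤ l i ∧ r i ≤ te)) →
      ∀ i : Fin k, ¬(ts ≤ l i ∧ r i ≤ te ∧
        ∀ h : (i : ℕ) + 1 < k, te < r ⟨(i : ℕ) + 1, h⟩)) := by
  refine ⟨fun hcov => ?_, fun hnone i hi => hnone i (IntervalChain.TripleActive.covers hi)⟩
  obtain ⟨i, hi⟩ := IntervalChain.exists_tripleActive hl.monotone hcov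
  exact ⟨i, hi, fun j hj => IntervalChain.tripleActive_unique hr hj hi⟩

/-- Correctness of the redefined active timestamps: given a chain of intervals
`[l i, r i]` with strictly increasing left endpoints and non-decreasing right
endpoints, converted into triples `[l i, r i, r (i+1)]` (and `[l (k-1), r (k-1), ∞]`
for the last one), a window `[ts,te]` activates exactly one triple if it covers
some interval, and activates none otherwise.  A triple `i` is *active* when
`ts ≤ l i`, `r i ≤ te`, and `te < r (i+1)` whenever `i+1 < k`. -/
theorem stmt16 (k : ℕ) (l r : Fin k → ℝ)
    (hl : StrictMono l) (hr : Monotone r) (hlr : ∀ i, l i ≤ r i)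
    (ts te : ℝ) :
    ((∃ i, ts ≤ l i ∧ r i ≤ te) →
      ∃! i : Fin k, ts ≤ l i ∧ r i ≤ te ∧
        ∀ h : (i : ℕ) + 1 < k, te < r ⟨(i : ℕ) + 1, h⟩) ∧
    ((∀ i, ¬(ts ≤ l i ∧ r i ≤ te)) →
      ∀ i : Fin k, ¬(ts ≤ l i ∧ r i ≤ te ∧
        ∀ h : (i : ℕ) + 1 < k, te < r ⟨(i : ℕ) + 1, h⟩)) :=
  stmt16_general k l r hl hr ts te
end
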